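/- Let P_{n,k}(x) = Σ x^{pmp_{\underline{1}32}(σ)} where the sum is over σ ∈ S_n whose last descent is at position k (i.e., σ_k > σ_{k+1} < σ_{k+2} < ... < σ_n). Then for 1 ≤ k ≤ n-1, P_{n,k}(x) = (k-1)x·P_{n-1,k-1}(x) + 1 + Σ_{ℓ=1}^{k} P_{n-1,ℓ}(x), with P_{n,0}(x) = P_{n,n}(x) = 0. -/

import Mathlib

/-- Number of positions that start an occurrence of 132 in `σ` (pmp of `\underline{1}32`). -/
noncomputable def pmpS132 {n : ℕ} (σ : Equiv.Perm (Fin n)) : ℕ :=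
  Nat.card {i : Fin n // ∃ j k : Fin n, i < j ∧ j < k ∧ σ i < σ k ∧ σ k < σ j}

/-- The last descent of `σ` is at position `k` (1-indexed):
`σ_k > σ_{k+1} < σ_{k+2} < ... < σ_n`. -/
def LastDescentAt {n : ℕ} (σ : Equiv.Perm (Fin n)) (k : ℕ) : Prop :=
  ∃ (h1 : 0 < k) (h2 : k < n),
    σ ⟨k, h2⟩ < σ ⟨k - 1, by omega⟩ ∧
    ∀ j : ℕ, k ≤ j → ∀ hj : j + 1 < n, σ ⟨j, by omega⟩ < σ ⟨j + 1, hj⟩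

open Classical in
/-- `P n k = Σ x^{pmp_{\underline{1}32}(σ)}` over `σ ∈ S_n` with last descent at position `k`. -/
noncomputable def P (n k : ℕ) : Polynomial ℕ :=
  ∑ σ : Equiv.Perm (Fin n), if LastDescentAt σ k then Polynomial.X ^ pmpS132 σ else 0

/-!
Every permutation of `Fin (m + 1)` arises uniquely by inserting the smallest value `0` at some
0-indexed position `p` of a permutation `τ` of `Fin m`. Let `d` be the last descent of `τ`
(with `d = 0` for the identity). The new permutation has its last descent at `d + 1` if `p < d`
and at `p` otherwise, and it has one more position starting a `132` (the inserted `0`) exactly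
when `p < d`, because then `τ` is not increasing after `p`. So, for `k ≥ 1`, each `τ` with last
descent `k - 1` yields `k - 1` permutations (`p < k - 1`) with last descent `k`, each counted by
`x · x^{pmp τ}`, and each `τ` with last descent at most `k` yields one more (`p = k`), counted by
`x^{pmp τ}`; among the latter, the identity gives the term `1`.
-/

open Equiv Finset Polynomial

theorem Fin.val_succAbove {m : ℕ} (p : Fin (m + 1)) (i : Fin m) :
    (p.succAbove i : ℕ) = if (i : ℕ) < p then (i : ℕ) else (i : ℕ) + 1 := by
  rcases lt_or_ge (i : ℕ) p with h | h
  · rw [Fin.succAbove_of_castSucc_lt _ _ h, if_pos h, Fin.val_castSucc]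
  · rw [Fin.succAbove_of_le_castSucc _ _ h, if_neg h.not_gt, Fin.val_succ]

def IncreasingFrom {α : Type*} [Preorder α] {m : ℕ} (f : Fin m → α) (t : ℕ) : Prop :=
  StrictMonoOn f {i | t ≤ (i : ℕ)}

section IncreasingFrom

variable {α : Type*} [Preorder α] {m : ℕ} {f : Fin m → α} {s t : ℕ}

theorem IncreasingFrom.mono (h : IncreasingFrom f s) (hst : s ≤ t) : IncreasingFrom f t :=
  StrictMonoOn.mono h fun _ hi => hst.trans hi

theorem increasingFrom_of_le (f : Fin m → α) (ht : m ≤ t) : IncreasingFrom f t :=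
  fun i hi => absurd i.isLt (not_lt.2 (ht.trans hi))

theorem increasingFrom_iff_lt_succ : IncreasingFrom f t ↔
    ∀ j, t ≤ j → ∀ hj : j + 1 < m, f ⟨j, by omega⟩ < f ⟨j + 1, hj⟩ := by
  refine ⟨fun h j hj hjm => h hj (Nat.le_succ_of_le hj) (Fin.mk_lt_mk.2 j.lt_succ_self),
    fun h => ?_⟩
  have hconn : Set.OrdConnected {i : Fin m | t ≤ (i : ℕ)} :=
    IsUpperSet.ordConnected fun _ _ hab (ha : t ≤ _) => show t ≤ _ from ha.trans hab
  refine strictMonoOn_of_lt_succ hconn fun a ha hta _ => ?_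
  have hsucc : (a : ℕ) + 1 = (Order.succ a : Fin m) :=
    Nat.covBy_iff_add_one_eq.1 (Fin.covBy_iff.1 (Order.covBy_succ_of_not_isMax ha))
  generalize Order.succ a = b at hsucc ⊢
  obtain ⟨a, _⟩ := a
  obtain ⟨b, hb⟩ := b
  obtain rfl : a + 1 = b := hsucc
  exact h a hta hb

end IncreasingFrom

namespace Equiv.Perm

variable {m : ℕ}

/-- The last descent of `τ` (1-indexed, as in `LastDescentAt`), or `0` if `τ = 1`: it is the
least 0-indexed position from which `τ` is increasing. -/
noncomputable def lastDescent (τ : Perm (Fin m)) : ℕ :=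
  by classical exact Nat.find ⟨m, increasingFrom_of_le τ le_rfl⟩

theorem lastDescent_le_iff {τ : Perm (Fin m)} {t : ℕ} :
    τ.lastDescent ≤ t ↔ IncreasingFrom τ t := by
  classical
  rw [lastDescent, Nat.find_le_iff]
  exact ⟨fun ⟨s, hst, hs⟩ => hs.mono hst, fun ht => ⟨t, le_rfl, ht⟩⟩

theorem lastDescent_le (τ : Perm (Fin m)) : τ.lastDescent ≤ m :=
  lastDescent_le_iff.2 (increasingFrom_of_le τ le_rfl)

theorem lastDescent_eq_zero_iff {τ : Perm (Fin m)} : τ.lastDescent = 0 ↔ τ = 1 := by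
  rw [← Nat.le_zero, lastDescent_le_iff]
  refine ⟨fun h => Equiv.ext fun i => congrFun (StrictMono.eq_id fun a b hab => ?_) i, ?_⟩
  · exact h (Nat.zero_le a) (Nat.zero_le b) hab
  · rintro rfl a _ b _ hab
    exact hab

theorem lastDescentAt_iff {τ : Perm (Fin m)} {k : ℕ} :
    LastDescentAt τ k ↔ 0 < k ∧ τ.lastDescent = k := by
  rcases k with _ | j
  · simp [LastDescentAt]
  simp only [LastDescentAt, Nat.add_sub_cancel, Nat.succ_pos, true_and, exists_true_left]
  rw [← increasingFrom_iff_lt_succ (f := τ), le_antisymm_iff, lastDescent_le_iff,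
    Nat.add_one_le_iff, ← not_le (a := τ.lastDescent), lastDescent_le_iff]
  constructor
  · rintro ⟨_, hdesc, hinc⟩
    refine ⟨hinc, fun h => ?_⟩
    exact (h (le_refl j) (Nat.le_succ j) (Fin.mk_lt_mk.2 j.lt_succ_self)).asymm hdesc
  · rintro ⟨hinc, hnot⟩
    simp only [increasingFrom_iff_lt_succ, not_forall, not_lt] at hnot
    obtain ⟨i, hji, him, hle⟩ := hnot
    obtain rfl : i = j := by
      by_contra hne
      exact (increasingFrom_iff_lt_succ.1 hinc i (by omega) him).not_ge hle
    exact ⟨him, hle.lt_of_ne (τ.injective.ne (by simp)), hinc⟩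

def insertZero (p : Fin (m + 1)) (τ : Perm (Fin m)) : Perm (Fin (m + 1)) :=
  ((finSuccEquiv' p).trans (optionCongr τ)).trans (finSuccEquiv' 0).symm

@[simp]
theorem insertZero_self (p : Fin (m + 1)) (τ : Perm (Fin m)) : insertZero p τ p = 0 := by
  simp [insertZero, finSuccEquiv'_at, finSuccEquiv'_symm_none]

@[simp]
theorem insertZero_succAbove (p : Fin (m + 1)) (τ : Perm (Fin m)) (i : Fin m) :
    insertZero p τ (p.succAbove i) = (τ i).succ := by
  simp [insertZero, finSuccEquiv'_succAbove, finSuccEquiv'_symm_some, Fin.zero_succAbove]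

theorem bijective_uncurry_insertZero :
    Function.Bijective (Function.uncurry (insertZero (m := m))) := by
  rw [Fintype.bijective_iff_injective_and_card]
  refine ⟨?_, by simp [Fintype.card_perm, Nat.factorial_succ]⟩
  rintro ⟨p, τ⟩ ⟨q, υ⟩ h
  simp only [Function.uncurry_apply_pair] at h
  obtain rfl : p = q :=
    (insertZero q υ).injective (by rw [insertZero_self, ← h, insertZero_self])
  obtain rfl : τ = υ := Equiv.ext fun i =>
    Fin.succ_injective _ (by rw [← insertZero_succAbove, h, insertZero_succAbove])
  rfl

section insertZero

variable {p : Fin (m + 1)} {τ : Perm (Fin m)} {t : ℕ}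

theorem increasingFrom_insertZero_succ_iff (hpt : (p : ℕ) ≤ t) :
    IncreasingFrom (insertZero p τ) (t + 1) ↔ IncreasingFrom τ t := by
  have hmem : ∀ a : Fin m, t ≤ a ↔ t + 1 ≤ (p.succAbove a : ℕ) := fun a => by
    rw [Fin.val_succAbove]
    split_ifs <;> omega
  have hne : ∀ x : Fin (m + 1), t + 1 ≤ (x : ℕ) → x ≠ p := fun x hx hxp => by
    subst hxp
    omega
  constructor
  · intro h a ha b hb hab
    simpa using h ((hmem a).1 ha) ((hmem b).1 hb) (Fin.succAbove_lt_succAbove_iff.2 hab)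
  · intro h x hx y hy hxy
    obtain ⟨a, rfl⟩ := Fin.exists_succAbove_eq (hne x hx)
    obtain ⟨b, rfl⟩ := Fin.exists_succAbove_eq (hne y hy)
    simpa using h ((hmem a).2 hx) ((hmem b).2 hy) (Fin.succAbove_lt_succAbove_iff.1 hxy)

theorem increasingFrom_insertZero_self_iff :
    IncreasingFrom (insertZero p τ) p ↔ IncreasingFrom τ p := by
  refine ⟨fun h => (increasingFrom_insertZero_succ_iff le_rfl).1 (h.mono (Nat.le_succ _)),
    fun h x hx y hy hxy => ?_⟩
  rcases eq_or_ne x p with rfl | hxp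
  · obtain ⟨b, rfl⟩ := Fin.exists_succAbove_eq hxy.ne'
    simp
  · have hpx : (p : ℕ) + 1 ≤ x := by
      have : (p : ℕ) ≤ x := hx
      have := Fin.val_ne_of_ne hxp
      omega
    exact (increasingFrom_insertZero_succ_iff le_rfl).2 h hpx (hpx.trans hxy.le) hxy

theorem not_increasingFrom_insertZero_of_lt (htp : t < p) :
    ¬IncreasingFrom (insertZero p τ) t := fun h => by
  have hlt := h (a := ⟨t, by omega⟩) (le_refl t) htp.le htp
  rw [insertZero_self] at hlt
  exact Fin.not_lt_zero _ hlt

end insertZero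

theorem lastDescent_insertZero (p : Fin (m + 1)) (τ : Perm (Fin m)) :
    (insertZero p τ).lastDescent =
      if (p : ℕ) < τ.lastDescent then τ.lastDescent + 1 else p := by
  split_ifs with hp
  · refine le_antisymm (lastDescent_le_iff.2 ?_) (Nat.succ_le_of_lt (lt_of_not_ge fun hle => ?_))
    · exact (increasingFrom_insertZero_succ_iff hp.le).2 (lastDescent_le_iff.1 le_rfl)
    · obtain ⟨d, hd⟩ := Nat.exists_eq_succ_of_ne_zero (Nat.ne_zero_of_lt hp)
      rw [hd, lastDescent_le_iff, increasingFrom_insertZero_succ_iff (by omega),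
        ← lastDescent_le_iff] at hle
      omega
  · refine le_antisymm (lastDescent_le_iff.2 ?_) (le_of_not_gt fun hlt => ?_)
    · exact increasingFrom_insertZero_self_iff.2 (lastDescent_le_iff.1 (by omega))
    · exact not_increasingFrom_insertZero_of_lt hlt (lastDescent_le_iff.1 le_rfl)

end Equiv.Perm

open Equiv.Perm

def IsStart132 {n : ℕ} (σ : Perm (Fin n)) (i : Fin n) : Prop :=
  ∃ j k : Fin n, i < j ∧ j < k ∧ σ i < σ k ∧ σ k < σ j

open Classical in
theorem pmpS132_eq_sum {n : ℕ} (σ : Perm (Fin n)) :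
    pmpS132 σ = ∑ i, if IsStart132 σ i then 1 else 0 := by
  rw [pmpS132, Nat.card_eq_fintype_card, Fintype.card_subtype, card_filter]
  exact sum_congr rfl fun i _ => if_congr Iff.rfl rfl rfl

theorem pmpS132_one {n : ℕ} : pmpS132 (1 : Perm (Fin n)) = 0 := by
  rw [pmpS132_eq_sum]
  refine sum_eq_zero fun i _ => if_neg ?_
  rintro ⟨j, k, -, hjk, -, hkj⟩
  exact hjk.asymm hkj

section insertZero

variable {m : ℕ} (p : Fin (m + 1)) (τ : Perm (Fin m))

theorem isStart132_insertZero_succAbove (i : Fin m) :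
    IsStart132 (insertZero p τ) (p.succAbove i) ↔ IsStart132 τ i := by
  constructor
  · rintro ⟨j, k, hij, hjk, hik, hkj⟩
    have hkp : k ≠ p := by
      rintro rfl
      simp at hik
    have hjp : j ≠ p := by
      rintro rfl
      simp at hkj
    obtain ⟨j, rfl⟩ := Fin.exists_succAbove_eq hjp
    obtain ⟨k, rfl⟩ := Fin.exists_succAbove_eq hkp
    simp only [insertZero_succAbove, Fin.succ_lt_succ_iff, Fin.succAbove_lt_succAbove_iff] at *
    exact ⟨j, k, hij, hjk, hik, hkj⟩
  · rintro ⟨j, k, hij, hjk, hik, hkj⟩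
    refine ⟨p.succAbove j, p.succAbove k, ?_⟩
    simpa using ⟨hij, hjk, hik, hkj⟩

theorem isStart132_insertZero_self_iff :
    IsStart132 (insertZero p τ) p ↔ (p : ℕ) < τ.lastDescent := by
  rw [← not_le, lastDescent_le_iff, ← increasingFrom_insertZero_self_iff]
  have hpos : ∀ x, x ≠ p → 0 < insertZero p τ x := fun x hx => by
    rw [Fin.pos_iff_ne_zero, ← insertZero_self p τ]
    exact (insertZero p τ).injective.ne hx
  constructor
  · rintro ⟨j, k, hpj, hjk, -, hkj⟩ h
    exact (h hpj.le (hpj.trans hjk).le hjk).asymm hkj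
  · intro h
    simp only [IncreasingFrom, StrictMonoOn, not_forall, not_lt] at h
    obtain ⟨x, hx, y, -, hxy, hyx⟩ := h
    have hpx : p ≤ x := hx
    have hxp : x ≠ p := by
      rintro rfl
      exact (hpos y hxy.ne').not_ge (by simpa using hyx)
    refine ⟨x, y, lt_of_le_of_ne hpx hxp.symm, hxy, ?_,
      hyx.lt_of_ne ((insertZero p τ).injective.ne hxy.ne')⟩
    rw [insertZero_self]
    exact hpos y (hpx.trans_lt hxy).ne'

theorem pmpS132_insertZero :
    pmpS132 (insertZero p τ) = pmpS132 τ + if (p : ℕ) < τ.lastDescent then 1 else 0 := by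
  classical
  rw [pmpS132_eq_sum, pmpS132_eq_sum, Fin.sum_univ_succAbove _ p, add_comm]
  simp only [isStart132_insertZero_self_iff, isStart132_insertZero_succAbove]

end insertZero

/-- Unlike `P m 0 = 0`, this counts the identity at `ℓ = 0`. -/
noncomputable def lastDescentPoly (m ℓ : ℕ) : ℕ[X] :=
  ∑ τ : Perm (Fin m), if τ.lastDescent = ℓ then X ^ pmpS132 τ else 0

theorem P_eq_lastDescentPoly {m k : ℕ} (hk : 0 < k) : P m k = lastDescentPoly m k := by
  simp [P, lastDescentPoly, lastDescentAt_iff, hk]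

theorem lastDescentPoly_zero (m : ℕ) : lastDescentPoly m 0 = 1 := by
  simp [lastDescentPoly, lastDescent_eq_zero_iff, pmpS132_one]

theorem sum_range_ite_lt_ite_eq {M : Type*} [AddCommMonoid M] {n d k : ℕ} (hd : d ≤ n)
    (hk : k < n) (a b : M) :
    ∑ p ∈ range n, (if p < d then a else if p = k then b else 0) =
      d • a + if d ≤ k then b else 0 := by
  rw [← sum_range_add_sum_Ico _ hd, sum_ite_of_true fun p hp => mem_range.1 hp,
    sum_ite_of_false fun p hp => (mem_Ico.1 hp).1.not_gt, sum_const, card_range, sum_ite_eq']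
  simp [mem_Ico, hk]

theorem sum_insertZero_lastDescent_eq {m k : ℕ} (hk : k ≤ m) (τ : Perm (Fin m)) :
    ∑ p : Fin (m + 1),
        (if (insertZero p τ).lastDescent = k then X ^ pmpS132 (insertZero p τ) else 0 : ℕ[X]) =
      τ.lastDescent • (if τ.lastDescent + 1 = k then X ^ (pmpS132 τ + 1) else 0) +
        if τ.lastDescent ≤ k then X ^ pmpS132 τ else 0 := by
  rw [← sum_range_ite_lt_ite_eq ((lastDescent_le τ).trans m.le_succ) (Nat.lt_succ_of_le hk),
    ← Fin.sum_univ_eq_sum_range]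
  refine Fintype.sum_congr _ _ fun p => ?_
  rw [lastDescent_insertZero, pmpS132_insertZero]
  split_ifs <;> rfl

theorem lastDescentPoly_succ {m k : ℕ} (hk : k ≤ m) :
    lastDescentPoly (m + 1) k =
      (k - 1) • (X * lastDescentPoly m (k - 1)) + ∑ ℓ ∈ Icc 0 k, lastDescentPoly m ℓ := by
  rw [lastDescentPoly, ← (Equiv.ofBijective _ bijective_uncurry_insertZero).sum_comp,
    Fintype.sum_prod_type, sum_comm]
  simp only [Equiv.ofBijective_apply, Function.uncurry_apply_pair]
  rw [sum_congr rfl fun τ _ => sum_insertZero_lastDescent_eq hk τ, sum_add_distrib,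
    lastDescentPoly, mul_sum, smul_sum]
  congr 1
  · refine sum_congr rfl fun τ _ => ?_
    by_cases h : τ.lastDescent + 1 = k
    · subst h
      simp [pow_succ, mul_comm]
    · rw [if_neg h, smul_zero]
      by_cases h' : τ.lastDescent = k - 1
      · obtain rfl : k = 0 := by omega
        simp
      · simp [h']
  · simp only [lastDescentPoly]
    rw [sum_comm]
    exact sum_congr rfl fun τ _ => by simp [sum_ite_eq]

theorem P_zero_right (m : ℕ) : P m 0 = 0 :=
  sum_eq_zero fun _ _ => if_neg fun ⟨h, _⟩ => h.false

theorem P_self (m : ℕ) : P m m = 0 :=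
  sum_eq_zero fun _ _ => if_neg fun ⟨_, h, _⟩ => h.false

theorem stmt10 (n k : ℕ) (h1 : 1 ≤ k) (h2 : k ≤ n - 1) :
    (∀ m, P m 0 = 0) ∧ (∀ m, P m m = 0) ∧
    P n k = (k - 1) • (Polynomial.X * P (n - 1) (k - 1)) + 1 +
      ∑ ℓ ∈ Finset.Icc 1 k, P (n - 1) ℓ := by
  refine ⟨P_zero_right, P_self, ?_⟩
  obtain ⟨m, rfl⟩ : ∃ m, n = m + 1 := ⟨n - 1, by omega⟩
  rw [Nat.add_sub_cancel] at h2 ⊢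
  have hprev : (k - 1) • (X * lastDescentPoly m (k - 1)) = (k - 1) • (X * P m (k - 1)) := by
    rcases Nat.eq_zero_or_pos (k - 1) with h | h
    · rw [h, zero_smul, zero_smul]
    · rw [P_eq_lastDescentPoly h]
  have hsum : ∑ ℓ ∈ Icc 0 k, lastDescentPoly m ℓ = 1 + ∑ ℓ ∈ Icc 1 k, P m ℓ := by
    rw [← insert_Icc_add_one_left_eq_Icc (Nat.zero_le k), sum_insert (by simp),
      lastDescentPoly_zero]
    exact congrArg _ (sum_congr rfl fun ℓ hℓ => (P_eq_lastDescentPoly (mem_Icc.1 hℓ).1).symm)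
  rw [P_eq_lastDescentPoly h1, lastDescentPoly_succ h2, hprev, hsum, add_assoc]
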